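/- The (m+1)×(m+1) matrix B with B_{11}=1, B_{1j} = -1/(m+2) for j ≥ 2, B_{i1} = -1 for i ≥ 2, B_{ii} = 1 for i ≥ 2, and all other entries 0, satisfies det(λ I - B) = (λ-1)^{m-1}·((λ-1)^2 - m/(m+2)), and hence the (1,1) entry of (λI - B)^{-1} equals (m+2)(λ-1)/(2 + (m+2)λ(λ-2)) whenever λ ∉ {0, 2} makes λI - B invertible. -/

import Mathlib

open Matrix

/-- The (m+1)×(m+1) matrix B with B₀₀ = 1, B₀ⱼ = -1/(m+2) for j ≠ 0,
Bᵢ₀ = -1 for i ≠ 0, Bᵢᵢ = 1 for i ≠ 0, and all other entries 0. -/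
noncomputable def Bmat (m : ℕ) : Matrix (Fin (m + 1)) (Fin (m + 1)) ℝ :=
  Matrix.of fun i j =>
    if i = 0 ∧ j = 0 then 1
    else if i = 0 then -(1 / ((m : ℝ) + 2))
    else if j = 0 then -1
    else if i = j then 1 else 0

/-!
`λI - B` is the arrowhead matrix `[[a, uᵀ], [v, c • 1]]` with `a = c = λ - 1` and constant
border vectors `u = 1/(m+2)`, `v = 1` of length `n = m`. Right multiplication by the lower
triangular arrowhead `[[c, 0], [-v, c • 1]]` clears the lower border and leaves an upper
triangular matrix, so `det · c^(n+1) = (a c - u ⬝ᵥ v) c^(2n)`. The factor `c` cannot be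
cancelled directly, but after replacing `c` by the monic polynomial `X + C c` it can, and
specializing `X = 0` gives `det = c^(n-1) (a c - u ⬝ᵥ v)`. The `(0,0)` cofactor is
`det (c • 1) = c^n`, which gives the entry of the inverse.
-/

namespace Matrix

section CommRing

variable {R : Type*} [CommRing R] {n : ℕ} (a : R) (u v : Fin n → R) (c : R)

/-- The block matrix `[[a, uᵀ], [v, c • 1]]`. -/
def arrowhead : Matrix (Fin (n + 1)) (Fin (n + 1)) R :=
  of fun i j =>
    Fin.cases (Fin.cases a u j)
      (fun i' => Fin.cases (v i') (fun j' => if i' = j' then c else 0) j) i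

@[simp] lemma arrowhead_zero_zero : arrowhead a u v c 0 0 = a := rfl

@[simp] lemma arrowhead_zero_succ (j : Fin n) : arrowhead a u v c 0 j.succ = u j := rfl

@[simp] lemma arrowhead_succ_zero (i : Fin n) : arrowhead a u v c i.succ 0 = v i := rfl

@[simp] lemma arrowhead_succ_succ (i j : Fin n) :
    arrowhead a u v c i.succ j.succ = if i = j then c else 0 := rfl

lemma transpose_arrowhead : (arrowhead a u v c)ᵀ = arrowhead a v u c := by
  ext i j
  cases i using Fin.cases <;> cases j using Fin.cases <;> simp [eq_comm]

lemma det_arrowhead_zero_row : det (arrowhead a 0 v c) = a * c ^ n := by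
  rw [det_of_isLowerTriangular]
  · simp [Fin.prod_univ_succ]
  · intro i j hij
    rw [OrderDual.toDual_lt_toDual] at hij
    cases i using Fin.cases <;> cases j using Fin.cases
    · exact absurd hij (lt_irrefl _)
    · simp
    · exact absurd hij (Fin.not_lt_zero _)
    · simp only [arrowhead_succ_succ, ite_eq_right_iff]
      rintro rfl
      exact absurd hij (lt_irrefl _)

lemma det_arrowhead_zero_col : det (arrowhead a u 0 c) = a * c ^ n := by
  rw [← det_transpose, transpose_arrowhead, det_arrowhead_zero_row]

lemma arrowhead_mul_arrowhead_zero_row (a' : R) (v' : Fin n → R) (c' : R) :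
    arrowhead a u v c * arrowhead a' 0 v' c' =
      arrowhead (a * a' + u ⬝ᵥ v') (c' • u) (a' • v + c • v') (c * c') := by
  ext i j
  cases i using Fin.cases <;> cases j using Fin.cases <;>
    simp [mul_apply, Fin.sum_univ_succ, dotProduct, mul_comm]

lemma det_arrowhead_mul_pow :
    det (arrowhead a u v c) * c ^ (n + 1) = (a * c - u ⬝ᵥ v) * c ^ (2 * n) := by
  have key := congrArg det (arrowhead_mul_arrowhead_zero_row a u v c c (-v) c)
  rw [det_mul, det_arrowhead_zero_row, smul_neg, add_neg_cancel, det_arrowhead_zero_col,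
    dotProduct_neg, ← sub_eq_add_neg] at key
  rwa [← pow_succ', ← sq, ← pow_mul] at key

lemma arrowhead_map {S : Type*} [CommRing S] (f : R →+* S) :
    (arrowhead a u v c).map f = arrowhead (f a) (f ∘ u) (f ∘ v) (f c) := by
  ext i j
  cases i using Fin.cases <;> cases j using Fin.cases <;> simp [apply_ite f]

lemma adjugate_arrowhead_zero_zero : (arrowhead a u v c).adjugate 0 0 = c ^ n := by
  have hblock : (arrowhead a u v c).submatrix Fin.succ Fin.succ = diagonal fun _ => c := by
    ext i j
    simp [diagonal_apply]
  rw [adjugate_fin_succ_eq_det_submatrix, Fin.succAbove_zero, hblock, det_diagonal]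
  simp

end CommRing

open Polynomial in
lemma det_arrowhead {R : Type*} [CommRing R] {n : ℕ} (a : R) (u v : Fin (n + 1) → R) (c : R) :
    det (arrowhead a u v c) = c ^ n * (a * c - u ⬝ᵥ v) := by
  have key : det (arrowhead (C a) (C ∘ u) (C ∘ v) (X + C c)) =
      (X + C c) ^ n * (C a * (X + C c) - (C ∘ u) ⬝ᵥ (C ∘ v)) := by
    apply ((monic_X_add_C c).pow (n + 2)).isRegular.right
    simp only [det_arrowhead_mul_pow]
    ring
  have := congrArg (evalRingHom 0) key
  rw [RingHom.map_det, RingHom.mapMatrix_apply, arrowhead_map] at this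
  simpa [Function.comp_def, dotProduct, eval_finsetSum] using this

/-- Both sides vanish when the matrix is singular, since `Matrix.inv` is then `0`. -/
lemma inv_arrowhead_zero_zero {K : Type*} [Field K] {n : ℕ} (a : K) (u v : Fin n → K) (c : K) :
    (arrowhead a u v c)⁻¹ 0 0 = c ^ n / det (arrowhead a u v c) := by
  rw [inv_def, smul_apply, adjugate_arrowhead_zero_zero, Ring.inverse_eq_inv', smul_eq_mul,
    div_eq_inv_mul]

end Matrix

lemma smul_one_sub_Bmat (m : ℕ) (lam : ℝ) :
    lam • (1 : Matrix (Fin (m + 1)) (Fin (m + 1)) ℝ) - Bmat m =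
      arrowhead (lam - 1) (fun _ => 1 / ((m : ℝ) + 2)) (fun _ => 1) (lam - 1) := by
  ext i j
  cases i using Fin.cases <;> cases j using Fin.cases <;>
    simp [Bmat, one_apply, Fin.succ_ne_zero, (Fin.succ_ne_zero _).symm, ite_sub_ite]

/-- det(λI - B) = (λ-1)^{m-1}((λ-1)² - m/(m+2)), and whenever λ ∉ {0,2} makes
λI - B invertible, the (1,1) entry of (λI - B)⁻¹ is
(m+2)(λ-1)/(2 + (m+2)λ(λ-2)). -/
theorem Bmat_det_and_inv_entry (m : ℕ) (hm : 1 ≤ m) (lam : ℝ) :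
    (lam • (1 : Matrix (Fin (m + 1)) (Fin (m + 1)) ℝ) - Bmat m).det =
      (lam - 1) ^ (m - 1) * ((lam - 1) ^ 2 - (m : ℝ) / ((m : ℝ) + 2)) ∧
    (lam ≠ 0 → lam ≠ 2 →
      IsUnit (lam • (1 : Matrix (Fin (m + 1)) (Fin (m + 1)) ℝ) - Bmat m) →
      (lam • (1 : Matrix (Fin (m + 1)) (Fin (m + 1)) ℝ) - Bmat m)⁻¹ 0 0 =
        ((m : ℝ) + 2) * (lam - 1) / (2 + ((m : ℝ) + 2) * lam * (lam - 2))) := by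
  obtain ⟨k, rfl⟩ := Nat.exists_eq_add_of_le' hm
  have hdot : (fun _ => 1 / ((↑(k + 1) : ℝ) + 2)) ⬝ᵥ (fun _ : Fin (k + 1) => (1 : ℝ)) =
      ↑(k + 1) / (↑(k + 1) + 2) := by
    simp [dotProduct, div_eq_mul_inv]
  have hdet : det (lam • (1 : Matrix (Fin (k + 1 + 1)) (Fin (k + 1 + 1)) ℝ) - Bmat (k + 1)) =
      (lam - 1) ^ k * ((lam - 1) ^ 2 - ↑(k + 1) / (↑(k + 1) + 2)) := by
    rw [smul_one_sub_Bmat, det_arrowhead, hdot, sq]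
  refine ⟨by simpa using hdet, fun _ _ _ => ?_⟩
  rw [smul_one_sub_Bmat, inv_arrowhead_zero_zero, ← smul_one_sub_Bmat, hdet]
  have hden : (lam - 1) ^ 2 - ↑(k + 1) / (↑(k + 1) + 2) =
      (2 + (↑(k + 1) + 2) * lam * (lam - 2)) / (↑(k + 1) + 2) := by
    field_simp
    ring
  rcases eq_or_ne (lam - 1) 0 with hc | hc
  · simp [hc]
  rw [pow_succ, mul_div_mul_left _ _ (pow_ne_zero k hc), hden, div_div_eq_mul_div]
  ring
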